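/- arXiv:2202.11930 — 7 statements merged into one kernel-verified Lean document; each statement's English description precedes it below -/
import Mathlib

section
/- For all real θ > 0 and integers d ≥ 1, i ≥ 0, and 0 ≤ j ≤ i+2, the identity ∑_{k=0}^{d-1} ∑_{l=0}^{d-1} C(d-1,k) · C(d-1,l) · ψ_{2d+i}^{k+l+j}(θ) = ψ_{i+2}^j(θ) holds. -/
/-!
Since `θ + (m - k)` and `θ + k` add up to the new denominator factor `2θ + m`, the moments
satisfy the Pascal-type rule `ψ_{m+1}^k + ψ_{m+1}^{k+1} = ψ_m^k` (i.e. `E[X^k(1-X)^{m-k}]`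
splits along `X + (1 - X) = 1`). Iterating it `s` times gives
`∑_k C(s,k) ψ_{m+s}^{k+r} = ψ_m^r`; the double sum is this identity applied once in `l`
(with `m = d + i + 1`) and once in `k` (with `m = i + 2`).
-/

open Finset Filter

/-- ψ_n^k(θ) = (∏_{i=1}^{k}(θ+i-1) · ∏_{j=1}^{n-k}(θ+j-1)) / ∏_{l=1}^{n}(2θ+l-1). -/
noncomputable def psi (θ : ℝ) (n k : ℕ) : ℝ :=
  ((∏ i ∈ Finset.range k, (θ + i)) * ∏ j ∈ Finset.range (n - k), (θ + j)) /
    ∏ l ∈ Finset.range n, (2 * θ + l)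

theorem psi_succ_add_psi_succ {θ : ℝ} {m k : ℕ} (hk : k ≤ m) (hθ : 2 * θ + m ≠ 0) :
    psi θ (m + 1) k + psi θ (m + 1) (k + 1) = psi θ m k := by
  obtain ⟨t, rfl⟩ := Nat.exists_eq_add_of_le hk
  have hsub : k + t + 1 - k = t + 1 := by omega
  have hsub' : k + t + 1 - (k + 1) = t := by omega
  simp only [psi, hsub, hsub', Nat.add_sub_cancel_left, prod_range_succ, ← add_div]
  have hθ' : 2 * θ + ((k + t : ℕ) : ℝ) ≠ 0 := mod_cast hθ
  rw [← mul_div_mul_right _ (∏ l ∈ range (k + t), (2 * θ + l)) hθ']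
  congr 1
  push_cast
  ring

theorem sum_choose_mul_psi {θ : ℝ} (hθ : 0 < θ) {m r : ℕ} (hr : r ≤ m) (s : ℕ) :
    ∑ k ∈ range (s + 1), (s.choose k : ℝ) * psi θ (m + s) (k + r) = psi θ m r := by
  induction s with
  | zero => simp
  | succ s ih =>
    have hpascal : ∀ k ∈ range (s + 1),
        (s.choose k : ℝ) * psi θ (m + (s + 1)) (k + r) +
            (s.choose k : ℝ) * psi θ (m + (s + 1)) (k + 1 + r) =
          (s.choose k : ℝ) * psi θ (m + s) (k + r) := by
      intro k hk
      rw [← mul_add, Nat.add_right_comm k 1 r, ← add_assoc m s 1,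
        psi_succ_add_psi_succ (by have := mem_range.mp hk; omega) (by positivity)]
    rw [sum_choose_succ_mul (fun k _ => psi θ (m + (s + 1)) (k + r)), ← sum_add_distrib,
      sum_congr rfl hpascal, ih]

theorem psi_double_binomial_sum (θ : ℝ) (hθ : 0 < θ) (d : ℕ) (hd : 1 ≤ d) (i j : ℕ)
    (hj : j ≤ i + 2) :
    ∑ k ∈ Finset.range d, ∑ l ∈ Finset.range d,
      (Nat.choose (d - 1) k : ℝ) * (Nat.choose (d - 1) l : ℝ) * psi θ (2 * d + i) (k + l + j) =
      psi θ (i + 2) j := by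
  obtain ⟨s, rfl⟩ := Nat.exists_eq_add_of_le' hd
  rw [Nat.add_sub_cancel]
  calc _ = ∑ k ∈ range (s + 1), (s.choose k : ℝ) *
          ∑ l ∈ range (s + 1), (s.choose l : ℝ) * psi θ (i + 2 + s + s) (l + (k + j)) := by
        refine sum_congr rfl fun k _ => ?_
        rw [mul_sum]
        refine sum_congr rfl fun l _ => ?_
        rw [show 2 * (s + 1) + i = i + 2 + s + s by omega, show k + l + j = l + (k + j) by omega]
        ring
    _ = ∑ k ∈ range (s + 1), (s.choose k : ℝ) * psi θ (i + 2 + s) (k + j) := by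
        refine sum_congr rfl fun k hk => ?_
        rw [sum_choose_mul_psi hθ (by have := mem_range.mp hk; omega)]
    _ = psi θ (i + 2) j := sum_choose_mul_psi hθ hj s
end

section
/- For all real θ > 0, integers d ≥ 1 and 0 ≤ m ≤ 2d, the difference ψ_{2d+1}^{m+1}(θ) - ψ_{2d+1}^{m}(θ) is positive if m > d, negative if m < d, and zero if m = d. -/
open Finset Filter

theorem psi_diff_sign (θ : ℝ) (hθ : 0 < θ) (d : ℕ) (hd : 1 ≤ d) (m : ℕ) (hm : m ≤ 2 * d) :
    (d < m → 0 < psi θ (2 * d + 1) (m + 1) - psi θ (2 * d + 1) m) ∧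
    (m < d → psi θ (2 * d + 1) (m + 1) - psi θ (2 * d + 1) m < 0) ∧
    (m = d → psi θ (2 * d + 1) (m + 1) - psi θ (2 * d + 1) m = 0) := by
  set D : ℝ := ∏ l ∈ Finset.range (2 * d + 1), (2 * θ + l) with hD
  have hDpos : 0 < D := Finset.prod_pos (by
    intro l _
    positivity)
  have hP1 : (0:ℝ) < ∏ i ∈ Finset.range m, (θ + i) := Finset.prod_pos (by
    intro i _; positivity)
  have hP2 : (0:ℝ) < ∏ j ∈ Finset.range (2 * d - m), (θ + j) := Finset.prod_pos (by
    intro j _; positivity)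
  have h1 : 2 * d + 1 - (m + 1) = 2 * d - m := by omega
  have h2 : 2 * d + 1 - m = (2 * d - m) + 1 := by omega
  have hcast : ((2 * d - m : ℕ) : ℝ) = 2 * (d:ℝ) - m := by
    push_cast [Nat.cast_sub hm]; ring
  have key : psi θ (2 * d + 1) (m + 1) - psi θ (2 * d + 1) m =
      ((∏ i ∈ Finset.range m, (θ + i)) * (∏ j ∈ Finset.range (2 * d - m), (θ + j)))
        * (2 * ((m:ℝ) - d)) / D := by
    unfold psi
    rw [hD, h1, h2, Finset.prod_range_succ, Finset.prod_range_succ, Finset.prod_range_succ, div_sub_div_same, hcast]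
    ring
  have hC : 0 < (∏ i ∈ Finset.range m, (θ + i)) * (∏ j ∈ Finset.range (2 * d - m), (θ + j)) :=
    mul_pos hP1 hP2
  refine ⟨fun h => ?_, fun h => ?_, fun h => ?_⟩
  · rw [key]
    apply div_pos _ hDpos
    apply mul_pos hC
    have : (d:ℝ) < m := by exact_mod_cast h
    linarith
  · rw [key]
    apply div_neg_of_neg_of_pos _ hDpos
    apply mul_neg_of_pos_of_neg hC
    have : (m:ℝ) < d := by exact_mod_cast h
    linarith
  · rw [key, h]
    simp
end

section
/- For every fixed integer n ≥ 1, the limit as θ → 0+ of (ψ_n^0(θ) - 1/2)/θ equals -H_{n-1}/2, where H_m = ∑_{i=1}^{m} 1/i is the m-th harmonic number (H_0 = 0). -/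
open Finset Filter

/-!
Splitting off the factor `θ / (2θ) = 1/2` of index `l = 0`, `ψ_{m+1}^0(θ)` is `1/2` times
`∏_{i<m} (θ + i + 1) / (2θ + i + 1)`. Each factor equals `1` at `θ = 0` and has derivative
`-1/(i+1)` there, so the product has derivative `-H_m` at `0`, and the difference quotient of
`ψ_{m+1}^0` at `0⁺` tends to `-H_m / 2`.
-/

lemma hasDerivAt_add_div_two_mul_add {a : ℝ} (ha : a ≠ 0) :
    HasDerivAt (fun θ : ℝ => (θ + a) / (2 * θ + a)) (-a⁻¹) 0 := by
  have hnum : HasDerivAt (fun θ : ℝ => θ + a) 1 0 := (hasDerivAt_id 0).add_const a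
  have hden : HasDerivAt (fun θ : ℝ => 2 * θ + a) 2 0 := by
    simpa using ((hasDerivAt_id (0 : ℝ)).const_mul 2).add_const a
  refine (hnum.fun_div hden (by simpa using ha)).congr_deriv ?_
  simp only [mul_zero, zero_add]
  field_simp
  ring

lemma hasDerivAt_prod_add_div_two_mul_add {ι : Type*} (s : Finset ι) {a : ι → ℝ}
    (ha : ∀ i ∈ s, a i ≠ 0) :
    HasDerivAt (fun θ : ℝ => ∏ i ∈ s, (θ + a i) / (2 * θ + a i)) (-∑ i ∈ s, (a i)⁻¹) 0 := by
  classical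
  have hone : ∀ i ∈ s, ((0 : ℝ) + a i) / (2 * 0 + a i) = 1 := fun i hi => by
    simpa using div_self (ha i hi)
  refine (HasDerivAt.fun_finsetProd fun i hi =>
    hasDerivAt_add_div_two_mul_add (ha i hi)).congr_deriv ?_
  rw [← sum_neg_distrib]
  refine sum_congr rfl fun i _ => ?_
  rw [prod_congr rfl fun j hj => hone j (mem_of_mem_erase hj), prod_const_one, one_smul]

lemma psi_succ_zero {θ : ℝ} (hθ : 0 < θ) (m : ℕ) :
    psi θ (m + 1) 0 = 1 / 2 * ∏ i ∈ range m, (θ + (i + 1 : ℕ)) / (2 * θ + (i + 1 : ℕ)) := by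
  have hden : ∏ i ∈ range m, (2 * θ + (i + 1 : ℕ)) ≠ 0 :=
    prod_ne_zero_iff.mpr fun i _ => by positivity
  rw [psi, Nat.sub_zero, prod_range_zero, one_mul, prod_range_succ', prod_range_succ',
    prod_div_distrib]
  field_simp
  push_cast
  ring

theorem psi_zero_low_mutation (n : ℕ) (hn : 1 ≤ n) :
    Filter.Tendsto (fun θ : ℝ => (psi θ n 0 - 1 / 2) / θ) (nhdsWithin 0 (Set.Ioi 0))
      (nhds (-(∑ i ∈ Finset.range (n - 1), (1 : ℝ) / (i + 1)) / 2)) := by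
  obtain ⟨m, rfl⟩ : ∃ m, n = m + 1 := ⟨n - 1, (Nat.sub_add_cancel hn).symm⟩
  set g : ℝ → ℝ := fun θ => 1 / 2 * ∏ i ∈ range m, (θ + (i + 1 : ℕ)) / (2 * θ + (i + 1 : ℕ))
  have hg : HasDerivAt g (-(∑ i ∈ range m, (1 : ℝ) / (i + 1)) / 2) 0 := by
    have h := (hasDerivAt_prod_add_div_two_mul_add (range m)
      (a := fun i => ((i + 1 : ℕ) : ℝ)) fun i _ => by positivity).const_mul (1 / 2 : ℝ)
    refine h.congr_deriv ?_
    push_cast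
    simp only [one_div]
    ring
  have hg0 : g 0 = 1 / 2 := by
    simp only [g, zero_add, mul_zero]
    rw [prod_eq_one fun i _ => div_self (by positivity), mul_one]
  rw [Nat.add_sub_cancel]
  refine tendsto_nhdsWithin_congr (fun θ hθ => ?_) (by simpa using hg.tendsto_slope_zero_right)
  rw [hg0, psi_succ_zero hθ, inv_mul_eq_div]
end

section
/- For every integer d ≥ 2, the function k₀ ↦ (2k₀+1)·C(2d, 2k₀+1)/C(d-1, k₀)² on {0, 1, …, d-1} attains its minimum value 2d at k₀ = 0 and its maximum value 2d(2d-1) at k₀ = d-1. -/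
open Finset Filter

lemma step_ineq (k m : ℕ) :
    Nat.choose (2*(k+m+1)+1) (2*k) * Nat.choose (k+m+1) (k+1) ^ 2 ≤
    Nat.choose (2*(k+m+1)+1) (2*k+2) * Nat.choose (k+m+1) k ^ 2 := by
  set N := 2*(k+m+1)+1 with hN
  set a := Nat.choose N (2*k) with ha
  set mid := Nat.choose N (2*k+1) with hmid
  set b := Nat.choose N (2*k+2) with hb
  set c := Nat.choose (k+m+1) k with hc
  set e := Nat.choose (k+m+1) (k+1) with he
  have h1 : mid * (2*k+1) = a * (2*m+3) := by
    have := Nat.choose_succ_right_eq N (2*k)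
    rw [show N - 2*k = 2*m+3 from by omega] at this
    simpa using this
  have h2 : b * (2*k+2) = mid * (2*m+2) := by
    have := Nat.choose_succ_right_eq N (2*k+1)
    rw [show N - (2*k+1) = 2*m+2 from by omega] at this
    simpa using this
  have h3 : e * (k+1) = c * (m+1) := by
    have := Nat.choose_succ_right_eq (k+m+1) k
    rw [show k+m+1 - k = m+1 from by omega] at this
    simpa using this
  have hP : 0 < (2*k+1)*(2*k+2)*(k+1)^2 := by positivity
  have inner : (m+1)*(2*k+1) ≤ (2*m+3)*(k+1) := by nlinarith
  have key : (m+1)^2*((2*k+1)*(2*k+2)) ≤ (2*m+3)*(2*m+2)*(k+1)^2 := by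
    calc (m+1)^2*((2*k+1)*(2*k+2)) = (2*(m+1)*(k+1)) * ((m+1)*(2*k+1)) := by ring
      _ ≤ (2*(m+1)*(k+1)) * ((2*m+3)*(k+1)) := Nat.mul_le_mul_left _ inner
      _ = (2*m+3)*(2*m+2)*(k+1)^2 := by ring
  refine Nat.le_of_mul_le_mul_right ?_ hP
  calc a * e^2 * ((2*k+1)*(2*k+2)*(k+1)^2)
      = a * (e*(k+1))^2 * ((2*k+1)*(2*k+2)) := by ring
    _ = a * (c*(m+1))^2 * ((2*k+1)*(2*k+2)) := by rw [h3]
    _ = a * c^2 * ((m+1)^2*((2*k+1)*(2*k+2))) := by ring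
    _ ≤ a * c^2 * ((2*m+3)*(2*m+2)*(k+1)^2) := Nat.mul_le_mul_left _ key
    _ = (a*(2*m+3)) * (2*m+2) * (c^2*(k+1)^2) := by ring
    _ = (mid*(2*k+1)) * (2*m+2) * (c^2*(k+1)^2) := by rw [← h1]
    _ = (mid*(2*m+2)) * (2*k+1) * (c^2*(k+1)^2) := by ring
    _ = (b*(2*k+2)) * (2*k+1) * (c^2*(k+1)^2) := by rw [← h2]
    _ = b * c^2 * ((2*k+1)*(2*k+2)*(k+1)^2) := by ring

lemma lower_bound (n : ℕ) : ∀ k, k ≤ n → Nat.choose n k ^ 2 ≤ Nat.choose (2*n+1) (2*k) := by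
  intro k
  induction k with
  | zero => simp
  | succ k ih =>
    intro hk
    have hk' : k ≤ n := by omega
    have ihk := ih hk'
    obtain ⟨m, hm⟩ : ∃ m, n = k + m + 1 := ⟨n - k - 1, by omega⟩
    subst hm
    have hs := step_ineq k m
    have hc : 0 < Nat.choose (k+m+1) k ^ 2 := by
      have := Nat.choose_pos (show k ≤ k+m+1 by omega)
      positivity
    refine Nat.le_of_mul_le_mul_left ?_ hc
    calc Nat.choose (k+m+1) k ^ 2 * Nat.choose (k+m+1) (k+1) ^ 2
        ≤ Nat.choose (2*(k+m+1)+1) (2*k) * Nat.choose (k+m+1) (k+1) ^ 2 :=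
          Nat.mul_le_mul_right _ ihk
      _ ≤ Nat.choose (2*(k+m+1)+1) (2*k+2) * Nat.choose (k+m+1) k ^ 2 := hs
      _ = Nat.choose (k+m+1) k ^ 2 * Nat.choose (2*(k+m+1)+1) (2*(k+1)) := by
          ring_nf
  
lemma upper_bound (n : ℕ) : ∀ j k, k + j = n → Nat.choose (2*n+1) (2*k) ≤ (2*n+1) * Nat.choose n k ^ 2 := by
  intro j
  induction j with
  | zero =>
    intro k hk
    have hk' : k = n := by omega
    subst hk'
    have hcs : Nat.choose (2*k+1) (2*k) = 2*k+1 := by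
      have := Nat.choose_symm (show 1 ≤ 2*k+1 by omega)
      simpa using this.symm
    rw [hcs]
    simp [Nat.choose_self]
  | succ j ih =>
    intro k hk
    have ihk := ih (k+1) (by omega)
    obtain ⟨m, hm⟩ : ∃ m, n = k + m + 1 := ⟨j, by omega⟩
    have hs := step_ineq k m
    rw [← hm] at hs
    have he : 0 < Nat.choose n (k+1) ^ 2 := by
      have := Nat.choose_pos (show k+1 ≤ n by omega)
      positivity
    refine Nat.le_of_mul_le_mul_right ?_ he
    calc Nat.choose (2*n+1) (2*k) * Nat.choose n (k+1) ^ 2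
        ≤ Nat.choose (2*n+1) (2*k+2) * Nat.choose n k ^ 2 := hs
      _ ≤ ((2*n+1) * Nat.choose n (k+1) ^ 2) * Nat.choose n k ^ 2 := by
          have : Nat.choose (2*n+1) (2*(k+1)) ≤ (2*n+1) * Nat.choose n (k+1) ^ 2 := ihk
          rw [show 2*k+2 = 2*(k+1) from by ring]
          exact Nat.mul_le_mul_right _ this
      _ = (2*n+1) * Nat.choose n k ^ 2 * Nat.choose n (k+1) ^ 2 := by ring

theorem threshold_min_max (d : ℕ) (hd : 2 ≤ d)
    (T : ℕ → ℝ)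
    (hT : ∀ k₀, T k₀ = ((2 * k₀ + 1) * (Nat.choose (2 * d) (2 * k₀ + 1)) : ℝ) /
      ((Nat.choose (d - 1) k₀ : ℝ)) ^ 2) :
    (∀ k₀, k₀ ≤ d - 1 → T 0 ≤ T k₀ ∧ T k₀ ≤ T (d - 1)) ∧
    T 0 = 2 * d ∧ T (d - 1) = 2 * d * (2 * d - 1) := by
  obtain ⟨n, rfl⟩ : ∃ n, d = n + 1 := ⟨d - 1, by omega⟩
  have hn : 1 ≤ n := by omega
  simp only [Nat.add_sub_cancel] at *
  -- rewrite T k₀ in terms of choose (2n+1) (2k)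
  have hT' : ∀ k₀, T k₀ = (2*(n+1) * Nat.choose (2*n+1) (2*k₀) : ℝ) / (Nat.choose n k₀ : ℝ)^2 := by
    intro k₀
    rw [hT k₀]
    have hnat : (2*(n+1)) * Nat.choose (2*n+1) (2*k₀) = Nat.choose (2*(n+1)) (2*k₀+1) * (2*k₀+1) := by
      have := Nat.add_one_mul_choose_eq (2*n+1) (2*k₀)
      simpa [Nat.succ_eq_add_one, show 2*n+1+1 = 2*(n+1) from by ring] using this
    have hreal : ((2*(n+1) * Nat.choose (2*n+1) (2*k₀) : ℕ) : ℝ)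
        = (2*(k₀:ℝ)+1) * (Nat.choose (2*(n+1)) (2*k₀+1) : ℝ) := by
      rw [hnat]; push_cast; ring
    rw [← hreal]; push_cast; ring
  have hTn : T n = 2*(n+1) * (2*n+1) := by
    rw [hT' n]
    have hcs : Nat.choose (2*n+1) (2*n) = 2*n+1 := by
      have := Nat.choose_symm (show 1 ≤ 2*n+1 by omega)
      simpa using this.symm
    rw [hcs]
    simp [Nat.choose_self]
  have hT0 : T 0 = 2*(n+1) := by
    rw [hT' 0]; simp
  refine ⟨?_, by rw [hT0]; push_cast; ring, by rw [hTn]; push_cast [hn]; ring⟩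
  intro k₀ hk₀
  have hcpos : (0:ℝ) < (Nat.choose n k₀ : ℝ)^2 := by
    have := Nat.choose_pos hk₀
    positivity
  have hlow := lower_bound n k₀ hk₀
  have hup := upper_bound n (n - k₀) k₀ (by omega)
  constructor
  · rw [hT0, hT' k₀]
    rw [le_div_iff₀ hcpos]
    have : ((Nat.choose n k₀ : ℝ))^2 ≤ (Nat.choose (2*n+1) (2*k₀) : ℝ) := by
      exact_mod_cast hlow
    nlinarith
  · rw [hTn, hT' k₀]
    rw [div_le_iff₀ hcpos]
    have : (Nat.choose (2*n+1) (2*k₀) : ℝ) ≤ (2*n+1) * ((Nat.choose n k₀ : ℝ))^2 := by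
      exact_mod_cast hup
    nlinarith
end

section
/- For all real θ > 0 and integers d ≥ 1, ∑_{k=0}^{d-1} (C(d-1,k)/(k+1)) · ψ_{d+1}^{k+1}(θ) = (1/d)·(1 - ψ_{d+1}^0(θ)). -/
open Finset Filter

/-! With rising factorials `x^{(k)} = x(x+1)⋯(x+k-1)` we have
`ψ_{d+1}^k(θ) = θ^{(k)} θ^{(d+1-k)} / (2θ)^{(d+1)}`. Splitting `C(d+1,k) = C(d,k) + C(d,k-1)`
in the Chu–Vandermonde convolution `(2θ)^{(d+1)} = ∑ₖ C(d+1,k) θ^{(k)} θ^{(d+1-k)}` gives two sums,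
each equal to `∑ₖ C(d,k) θ^{(k)} θ^{(d+1-k)}` up to the symmetry `k ↦ d - k`; hence
`∑ₖ C(d,k) ψ_{d+1}^k(θ) = 1/2`. The theorem follows from `C(d-1,k)/(k+1) = C(d,k+1)/d` after
removing the `k = 0` term. -/

open Polynomial

section RisingFactorial

variable {R : Type*} [CommSemiring R]

theorem ascPochhammer_eval_eq_prod_range (n : ℕ) (x : R) :
    (ascPochhammer R n).eval x = ∏ i ∈ range n, (x + i) := by
  induction n with
  | zero => simp
  | succ n ih => rw [ascPochhammer_succ_eval, ih, prod_range_succ]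

theorem ascPochhammer_eval_add (x y : R) (n : ℕ) :
    (ascPochhammer R n).eval (x + y) = ∑ ij ∈ antidiagonal n,
      (n.choose ij.1 : R) * ((ascPochhammer R ij.1).eval x * (ascPochhammer R ij.2).eval y) := by
  induction n with
  | zero => simp
  | succ n ih =>
    rw [sum_antidiagonal_choose_succ_mul
        (fun i j => (ascPochhammer R i).eval x * (ascPochhammer R j).eval y),
      ascPochhammer_succ_eval, ih, sum_mul, ← sum_add_distrib]
    refine sum_congr rfl fun ij hij => ?_
    obtain rfl : ij.1 + ij.2 = n := mem_antidiagonal.mp hij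
    rw [Nat.choose_symm_add, ascPochhammer_succ_eval, ascPochhammer_succ_eval]
    push_cast
    ring

theorem two_mul_sum_choose_ascPochhammer_mul_succ (x : R) (d : ℕ) :
    2 * ∑ ij ∈ antidiagonal d,
      (d.choose ij.1 : R) * ((ascPochhammer R ij.1).eval x * (ascPochhammer R (ij.2 + 1)).eval x) =
      (ascPochhammer R (d + 1)).eval (2 * x) := by
  have hswap : ∑ ij ∈ antidiagonal d,
      (d.choose ij.2 : R) * ((ascPochhammer R (ij.1 + 1)).eval x * (ascPochhammer R ij.2).eval x) =
      ∑ ij ∈ antidiagonal d, (d.choose ij.1 : R) *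
        ((ascPochhammer R ij.1).eval x * (ascPochhammer R (ij.2 + 1)).eval x) := by
    rw [← Nat.sum_antidiagonal_swap]
    simp only [Prod.fst_swap, Prod.snd_swap, mul_comm ((ascPochhammer R (_ + 1)).eval x)]
  rw [two_mul, two_mul, ascPochhammer_eval_add, sum_antidiagonal_choose_succ_mul
    (fun i j => (ascPochhammer R i).eval x * (ascPochhammer R j).eval x)]
  nth_rw 2 [← hswap]

end RisingFactorial

theorem psi_eq_ascPochhammer (θ : ℝ) (n k : ℕ) :
    psi θ n k = (ascPochhammer ℝ k).eval θ * (ascPochhammer ℝ (n - k)).eval θ /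
      (ascPochhammer ℝ n).eval (2 * θ) := by
  simp only [psi, ascPochhammer_eval_eq_prod_range]

theorem sum_choose_mul_psi_s17 {θ : ℝ} {d : ℕ}
    (h : (ascPochhammer ℝ (d + 1)).eval (2 * θ) ≠ 0) :
    ∑ k ∈ range (d + 1), (d.choose k : ℝ) * psi θ (d + 1) k = 1 / 2 := by
  have hsum : ∑ k ∈ range (d + 1), (d.choose k : ℝ) * psi θ (d + 1) k =
      (∑ ij ∈ antidiagonal d, (d.choose ij.1 : ℝ) *
        ((ascPochhammer ℝ ij.1).eval θ * (ascPochhammer ℝ (ij.2 + 1)).eval θ)) /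
      (ascPochhammer ℝ (d + 1)).eval (2 * θ) := by
    rw [Nat.sum_antidiagonal_eq_sum_range_succ (fun i j => (d.choose i : ℝ) *
      ((ascPochhammer ℝ i).eval θ * (ascPochhammer ℝ (j + 1)).eval θ)), sum_div]
    refine sum_congr rfl fun k hk => ?_
    rw [psi_eq_ascPochhammer, show d + 1 - k = d - k + 1 by grind]
    ring
  rw [hsum, div_eq_iff h, ← two_mul_sum_choose_ascPochhammer_mul_succ]
  ring

theorem Nat.cast_choose_pred_div_succ {K : Type*} [Field K] [CharZero K] {n : ℕ} (hn : 0 < n)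
    (k : ℕ) : ((n - 1).choose k : K) / (k + 1) = (n.choose (k + 1) : K) / n := by
  have h := Nat.add_one_mul_choose_eq (n - 1) k
  rw [Nat.sub_add_cancel hn] at h
  rw [div_eq_div_iff (Nat.cast_add_one_ne_zero k) (Nat.cast_ne_zero.mpr hn.ne')]
  exact_mod_cast (mul_comm _ _).trans h

theorem snowdrift_Mc_identity_general (θ : ℝ) (hθ : 0 < θ) (d : ℕ) :
    ∑ k ∈ Finset.range d, ((Nat.choose (d - 1) k : ℝ) / (k + 1)) * psi θ (d + 1) (k + 1) =
      (1 / d) * (1 / 2 - psi θ (d + 1) 0) := by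
  calc _ = (1 / d) * ∑ k ∈ range d, (d.choose (k + 1) : ℝ) * psi θ (d + 1) (k + 1) := by
        rw [mul_sum]
        refine sum_congr rfl fun k hk => ?_
        rw [Nat.cast_choose_pred_div_succ (pos_of_gt (mem_range.mp hk))]
        ring
    _ = (1 / d) * (1 / 2 - psi θ (d + 1) 0) := by
        rw [← sum_choose_mul_psi_s17 (d := d) (ascPochhammer_pos _ _ (by positivity)).ne',
          sum_range_succ']
        simp

theorem snowdrift_Mc_identity (θ : ℝ) (hθ : 0 < θ) (d : ℕ) (hd : 1 ≤ d) :
    ∑ k ∈ Finset.range d, ((Nat.choose (d - 1) k : ℝ) / (k + 1)) * psi θ (d + 1) (k + 1) =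
      (1 / d) * (1 / 2 - psi θ (d + 1) 0) :=
  snowdrift_Mc_identity_general θ hθ d
end

section
/- For all real θ > 0 and integers d ≥ 1, ∑_{k=0}^{d-1} ∑_{l=0}^{d-1} (C(d-1,k)/(k+1)) · (C(d-1,l)/(l+1)) · ψ_{2d+1}^{k+l+2}(θ) = (1/d²)·(ψ_1^0(θ) - 2·ψ_{d+1}^0(θ) + ψ_{2d+1}^0(θ)), where ψ_1^0(θ) = 1/2. -/
open Finset Filter

/-!
`psi θ n k` is the moment `E[p^k (1-p)^(n-k)]` of `p ∼ Beta(θ, θ)`, so `p + (1 - p) = 1` gives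
Pascal's recurrence `ψ_n^k = ψ_{n+1}^k + ψ_{n+1}^{k+1}` and, iterated, the binomial expansion
`ψ_n^a = ∑_i C(m,i) ψ_{n+m}^{a+i}`. After `C(d-1,k)/(k+1) = C(d,k+1)/d`, the double sum is
`d⁻² E[(1-p)(1-(1-p)^d)^2]`, and expanding the square gives the right-hand side. Without
probability: the inner and then the outer sum are each a binomial expansion minus its `i = 0` term.
-/

theorem psi_succ_add_psi_succ_succ {θ : ℝ} {n k : ℕ} (hn : 2 * θ + n ≠ 0) (hk : k ≤ n) :
    psi θ (n + 1) k + psi θ (n + 1) (k + 1) = psi θ n k := by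
  have hsub : ((n - k : ℕ) : ℝ) = n - k := Nat.cast_sub hk
  rw [psi, psi, psi, Nat.sub_add_comm hk, Nat.add_sub_add_right, prod_range_succ,
    prod_range_succ (fun i : ℕ => θ + i) k, prod_range_succ _ n, hsub, ← add_div]
  conv_rhs => rw [← mul_div_mul_right _ _ hn]
  ring

theorem sum_range_choose_mul_psi {θ : ℝ} (hθ : 0 < θ) {n a : ℕ} (ha : a ≤ n) (m : ℕ) :
    ∑ i ∈ range (m + 1), (m.choose i : ℝ) * psi θ (n + m) (a + i) = psi θ n a := by
  induction m with
  | zero => simp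
  | succ m ih =>
    rw [sum_choose_succ_mul (fun i _ => psi θ (n + (m + 1)) (a + i)), ← sum_add_distrib,
      ← ih]
    refine sum_congr rfl fun i hi => ?_
    rw [← mul_add, ← add_assoc, ← add_assoc, psi_succ_add_psi_succ_succ (by positivity)]
    have := mem_range.1 hi
    omega

theorem sum_range_choose_succ_mul_psi {θ : ℝ} (hθ : 0 < θ) {n a : ℕ} (ha : a ≤ n)
    (m : ℕ) :
    ∑ i ∈ range m, (m.choose (i + 1) : ℝ) * psi θ (n + m) (a + (i + 1)) =
      psi θ n a - psi θ (n + m) a := by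
  rw [eq_sub_iff_add_eq, ← sum_range_choose_mul_psi hθ ha m, sum_range_succ' _ m]
  simp

theorem psi_one_zero {θ : ℝ} (hθ : θ ≠ 0) : psi θ 1 0 = 1 / 2 := by
  simp only [psi, range_zero, prod_empty, tsub_zero, range_one, prod_singleton, Nat.cast_zero,
    add_zero, one_mul]
  field_simp

theorem Nat.cast_choose_pred_div_succ_s18 {d : ℕ} (hd : 1 ≤ d) (k : ℕ) :
    ((d - 1).choose k : ℝ) / (k + 1) = (d.choose (k + 1) : ℝ) / d := by
  obtain ⟨n, rfl⟩ := Nat.exists_eq_add_of_le' hd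
  rw [div_eq_div_iff (by positivity) (by positivity)]
  exact_mod_cast (Nat.add_one_mul_choose_eq n k).symm.trans (mul_comm _ _) |>.symm

theorem snowdrift_Mcc_identity (θ : ℝ) (hθ : 0 < θ) (d : ℕ) (hd : 1 ≤ d) :
    ∑ k ∈ Finset.range d, ∑ l ∈ Finset.range d,
      ((Nat.choose (d - 1) k : ℝ) / (k + 1)) * ((Nat.choose (d - 1) l : ℝ) / (l + 1)) *
        psi θ (2 * d + 1) (k + l + 2) =
      (1 / (d : ℝ) ^ 2) * (1 / 2 - 2 * psi θ (d + 1) 0 + psi θ (2 * d + 1) 0) := by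
  have h2d : 2 * d + 1 = d + 1 + d := by ring
  have inner : ∀ k ∈ range d,
      ∑ l ∈ range d, (d.choose (l + 1) : ℝ) * psi θ (2 * d + 1) (k + l + 2) =
        psi θ (d + 1) (k + 1) - psi θ (2 * d + 1) (k + 1) := by
    intro k hk
    rw [h2d, ← sum_range_choose_succ_mul_psi hθ (by have := mem_range.1 hk; omega) d]
    exact sum_congr rfl fun l _ => by rw [add_add_add_comm]
  have outer₁ := sum_range_choose_succ_mul_psi hθ (Nat.zero_le 1) d
  have outer₂ := sum_range_choose_succ_mul_psi hθ (Nat.zero_le (d + 1)) d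
  rw [add_comm 1 d] at outer₁
  rw [← h2d] at outer₂
  simp only [zero_add] at outer₁ outer₂
  calc _ = 1 / (d : ℝ) ^ 2 * ∑ k ∈ range d, (d.choose (k + 1) : ℝ) *
          ∑ l ∈ range d, (d.choose (l + 1) : ℝ) * psi θ (2 * d + 1) (k + l + 2) := by
        simp_rw [Nat.cast_choose_pred_div_succ_s18 hd, mul_sum]
        exact sum_congr rfl fun k _ => sum_congr rfl fun l _ => by ring
    _ = 1 / (d : ℝ) ^ 2 *
          ((psi θ 1 0 - psi θ (d + 1) 0) - (psi θ (d + 1) 0 - psi θ (2 * d + 1) 0)) := by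
        rw [sum_congr rfl fun k hk => by rw [inner k hk, mul_sub], sum_sub_distrib,
          outer₁, outer₂]
    _ = _ := by rw [psi_one_zero hθ.ne']; ring
end

section
/- For all real θ > 0 and integers d ≥ 2 and i with 0 ≤ i ≤ 3, the identity ∑_{k=0}^{d-1} ∑_{l=0}^{d-1} C(d-1,k) · C(d-1,l) · (l/(d-1)) · ψ_{2d+1}^{k+l+i}(θ) = ψ_4^{i+1}(θ) holds. -/
open Finset Filter


noncomputable def RF (x : ℝ) (k : ℕ) : ℝ := ∏ i ∈ Finset.range k, (x + i)

lemma RF_succ (x : ℝ) (k : ℕ) : RF x (k + 1) = RF x k * (x + k) := by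
  simp [RF, Finset.prod_range_succ]

lemma RF_add (x : ℝ) (a b : ℕ) : RF x (a + b) = RF x a * RF (x + a) b := by
  unfold RF
  rw [Finset.prod_range_add]
  congr 1
  refine Finset.prod_congr rfl fun j _ => ?_
  push_cast; ring

lemma RF_pos {x : ℝ} (hx : 0 < x) (k : ℕ) : 0 < RF x k := by
  refine Finset.prod_pos fun i _ => by positivity

lemma vdm (x y : ℝ) (m : ℕ) :
    ∑ k ∈ range (m + 1), (m.choose k : ℝ) * (RF x k * RF y (m - k)) = RF (x + y) m := by
  induction m with
  | zero => simp [RF]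
  | succ m ih =>
    rw [show m + 1 + 1 = m + 2 from rfl, sum_choose_succ_mul (fun a b => RF x a * RF y b) m]
    have h1 : ∀ k ∈ range (m + 1), (m.choose k : ℝ) * (RF x k * RF y (m + 1 - k))
        = (m.choose k : ℝ) * (RF x k * RF y (m - k)) * (y + (m - k : ℝ)) := by
      intro k hk
      have hk' : k ≤ m := by simpa [Nat.lt_succ_iff] using hk
      rw [show m + 1 - k = (m - k) + 1 by omega, RF_succ, Nat.cast_sub hk']
      ring
    have h2 : ∀ k ∈ range (m + 1), (m.choose k : ℝ) * (RF x (k + 1) * RF y (m - k))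
        = (m.choose k : ℝ) * (RF x k * RF y (m - k)) * (x + k) := by
      intro k _
      rw [RF_succ]; ring
    rw [sum_congr rfl h1, sum_congr rfl h2, RF_succ, ← ih, sum_mul, ← sum_add_distrib]
    refine sum_congr rfl fun k hk => ?_
    have hk' : k ≤ m := by simpa [Nat.lt_succ_iff] using hk
    have h3 : (m : ℝ) - (k : ℝ) + (k : ℝ) = m := by ring
    ring

lemma vdm2 (x y : ℝ) (a b : ℕ) :
    ∑ k ∈ range (a + 1), ∑ j ∈ range (b + 1),
      (a.choose k : ℝ) * (b.choose j : ℝ) * (RF x (k + j) * RF y (a + b - (k + j)))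
    = RF (x + y) (a + b) := by
  have key : ∀ k ∈ range (a + 1),
      ∑ j ∈ range (b + 1),
        (a.choose k : ℝ) * (b.choose j : ℝ) * (RF x (k + j) * RF y (a + b - (k + j)))
      = (a.choose k : ℝ) * (RF x k * RF y (a - k)) * RF (x + y + a) b := by
    intro k hk
    have hk' : k ≤ a := by simpa [Nat.lt_succ_iff] using hk
    have inner : ∀ j ∈ range (b + 1),
        (a.choose k : ℝ) * (b.choose j : ℝ) * (RF x (k + j) * RF y (a + b - (k + j)))
        = (a.choose k : ℝ) * (RF x k * RF y (a - k)) *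
            ((b.choose j : ℝ) * (RF (x + k) j * RF (y + (a - k : ℕ)) (b - j))) := by
      intro j hj
      have hj' : j ≤ b := by simpa [Nat.lt_succ_iff] using hj
      rw [RF_add x k j, show a + b - (k + j) = (a - k) + (b - j) by omega,
        RF_add y (a - k) (b - j)]
      ring
    rw [sum_congr rfl inner, ← mul_sum, vdm]
    have : x + (k : ℝ) + (y + ((a - k : ℕ) : ℝ)) = x + y + a := by
      rw [Nat.cast_sub hk']; ring
    rw [this]
  rw [sum_congr rfl key, ← sum_mul, vdm, RF_add]

lemma psi_eq (θ : ℝ) (n k : ℕ) : psi θ n k = RF θ k * RF θ (n - k) / RF (2 * θ) n := rfl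

theorem publicgoods_identity (θ : ℝ) (hθ : 0 < θ) (d : ℕ) (hd : 2 ≤ d) (i : ℕ) (hi : i ≤ 3) :
    ∑ k ∈ Finset.range d, ∑ l ∈ Finset.range d,
      (Nat.choose (d - 1) k : ℝ) * (Nat.choose (d - 1) l : ℝ) * ((l : ℝ) / (d - 1)) *
        psi θ (2 * d + 1) (k + l + i) =
      psi θ 4 (i + 1) := by
  obtain ⟨e, rfl⟩ : ∃ e, d = e + 2 := ⟨d - 2, by omega⟩
  have hd1 : e + 2 - 1 = e + 1 := rfl
  have hde : ((e:ℝ) + 2) - 1 = (e:ℝ) + 1 := by ring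
  -- step 1: peel off l = 0 and reindex, simplify coefficient
  have step1 : ∀ k ∈ range (e + 2),
      ∑ l ∈ range (e + 2),
        ((e + 1).choose k : ℝ) * ((e + 1).choose l : ℝ) * ((l : ℝ) / ((e:ℝ) + 1)) *
          psi θ (2 * (e + 2) + 1) (k + l + i)
      = ∑ j ∈ range (e + 1),
        ((e + 1).choose k : ℝ) * (e.choose j : ℝ) * psi θ (2 * (e + 2) + 1) (k + j + 1 + i) := by
    intro k _
    rw [Finset.sum_range_succ' (fun l => ((e + 1).choose k : ℝ) * ((e + 1).choose l : ℝ) *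
      ((l : ℝ) / ((e:ℝ) + 1)) * psi θ (2 * (e + 2) + 1) (k + l + i)) (e + 1)]
    simp only [Nat.cast_zero, zero_div, mul_zero, zero_mul, add_zero]
    refine sum_congr rfl fun j _ => ?_
    have hcoef : ((e + 1).choose (j + 1) : ℝ) * (((j:ℝ) + 1) / ((e:ℝ) + 1))
        = (e.choose j : ℝ) := by
      have h := Nat.add_one_mul_choose_eq e j
      have h' : ((e + 1 : ℕ) : ℝ) * (e.choose j : ℝ)
          = ((e + 1).choose (j + 1) : ℝ) * ((j + 1 : ℕ) : ℝ) := by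
        exact_mod_cast congrArg (Nat.cast : ℕ → ℝ) h
      push_cast at h'
      have he : (e : ℝ) + 1 ≠ 0 := by positivity
      field_simp
      linarith [h']
    push_cast
    rw [mul_assoc (((e + 1).choose k : ℝ)), hcoef, show k + (j + 1) + i = k + j + 1 + i by omega]
  rw [sum_congr rfl (by
    intro k hk
    have := step1 k hk
    simpa [hd1, hde] using this)]
  -- step 2: expand psi and factor
  have hsplit : ∀ k ∈ range (e + 2), ∀ j ∈ range (e + 1),
      psi θ (2 * (e + 2) + 1) (k + j + 1 + i)
      = (RF θ (i + 1) * RF θ (3 - i) / RF (2 * θ) (2 * (e + 2) + 1)) *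
          (RF (θ + (i + 1 : ℕ)) (k + j) * RF (θ + ((3 - i : ℕ) : ℝ)) (e + 1 + e - (k + j))) := by
    intro k hk j hj
    have hk' : k ≤ e + 1 := by simpa [Nat.lt_succ_iff] using hk
    have hj' : j ≤ e := by simpa [Nat.lt_succ_iff] using hj
    rw [psi_eq, show k + j + 1 + i = (i + 1) + (k + j) by omega, RF_add θ (i + 1) (k + j),
      show 2 * (e + 2) + 1 - ((i + 1) + (k + j)) = (3 - i) + (e + 1 + e - (k + j)) by omega,
      RF_add θ (3 - i) (e + 1 + e - (k + j))]
    ring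
  rw [sum_congr rfl (fun k hk => sum_congr rfl (fun j hj => by rw [hsplit k hk j hj]))]
  set C : ℝ := RF θ (i + 1) * RF θ (3 - i) / RF (2 * θ) (2 * (e + 2) + 1) with hC
  have factor : ∑ k ∈ range (e + 2), ∑ j ∈ range (e + 1),
      ((e + 1).choose k : ℝ) * (e.choose j : ℝ) *
        (C * (RF (θ + (i + 1 : ℕ)) (k + j) * RF (θ + ((3 - i : ℕ) : ℝ)) (e + 1 + e - (k + j))))
      = C * ∑ k ∈ range (e + 2), ∑ j ∈ range (e + 1),
        ((e + 1).choose k : ℝ) * (e.choose j : ℝ) *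
          (RF (θ + (i + 1 : ℕ)) (k + j) * RF (θ + ((3 - i : ℕ) : ℝ)) (e + 1 + e - (k + j))) := by
    rw [mul_sum]
    exact sum_congr rfl fun k _ => by rw [mul_sum]; exact sum_congr rfl fun j _ => by ring
  rw [factor, vdm2 (θ + (i + 1 : ℕ)) (θ + ((3 - i : ℕ) : ℝ)) (e + 1) e]
  have hxy : θ + ((i + 1 : ℕ) : ℝ) + (θ + ((3 - i : ℕ) : ℝ)) = 2 * θ + 4 := by
    rw [Nat.cast_sub hi]; push_cast; ring
  rw [hxy]
  have hden : RF (2 * θ) (2 * (e + 2) + 1) = RF (2 * θ) 4 * RF (2 * θ + 4) (e + 1 + e) := by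
    rw [show 2 * (e + 2) + 1 = 4 + (e + 1 + e) by omega, RF_add]
    norm_num
  have h4 : (0:ℝ) < RF (2 * θ + 4) (e + 1 + e) := RF_pos (by linarith) _
  have h5 : (0:ℝ) < RF (2 * θ) 4 := RF_pos (by linarith) _
  rw [hC, hden, psi_eq, show 4 - (i + 1) = 3 - i by omega]
  field_simp
end
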